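/- Consider the push-sum weight iterates initialized at a positive stochastic vector: y(t+1) = W(t) y(t) with y_i(0) = c_i, where c_i > 0 for all i and Σ_{i=1}^n c_i = 1, and let S(t) have entries s_ij(t) = w_ij(t) y_j(t) / (Σ_k w_ik(t) y_k(t)). If the sequence of directed graphs {G(t)} associated with {W(t)} is uniformly strongly connected, then for any fixed τ ≥ 0 the products S(t)···S(τ+1)S(τ) converge to 𝟙·y(τ)ᵀ exponentially fast as t → ∞: there exist constants C > 0 and μ ∈ [0,1) such that for all i, j and all t ≥ τ, | [Φ_S(t+1,τ)]_{ij} − y_j(τ) | ≤ C μ^{t−τ}. -/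
import Mathlib


open Finset

/-- The matrix `S(t)` with entries `s_ij(t) = w_ij(t) y_j(t) / (Σ_k w_ik(t) y_k(t))`. -/
noncomputable def Smat {n : ℕ} (W : ℕ → Matrix (Fin n) (Fin n) ℝ) (y : ℕ → Fin n → ℝ)
    (t : ℕ) : Matrix (Fin n) (Fin n) ℝ :=
  fun i j => W t i j * y t j / ∑ k, W t i k * y t k

/-- Auxiliary backward product: `phiAux M τ k = M (τ+k-1) * ⋯ * M (τ+1) * M τ`. -/
def phiAux {n : ℕ} (M : ℕ → Matrix (Fin n) (Fin n) ℝ) (τ : ℕ) :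
    ℕ → Matrix (Fin n) (Fin n) ℝ
  | 0 => 1
  | k + 1 => M (τ + k) * phiAux M τ k

/-- Backward product `Φ_M(t,τ) = M(t-1) * ⋯ * M(τ+1) * M(τ)` for `t > τ`. -/
def Phi {n : ℕ} (M : ℕ → Matrix (Fin n) (Fin n) ℝ) (t τ : ℕ) :
    Matrix (Fin n) (Fin n) ℝ :=
  phiAux M τ (t - τ)

lemma abs_sub_eq_min (a b : ℝ) : |a - b| = a + b - 2 * min a b := by
  rcases le_total a b with h | h
  · rw [abs_of_nonpos (by linarith), min_eq_left h]; ring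
  · rw [abs_of_nonneg (by linarith), min_eq_right h]; ring

lemma colDiff {n : ℕ} (Q : Matrix (Fin n) (Fin n) ℝ)
    (hcol : ∀ j, ∑ i, Q i j = 1) (c : ℝ) (hQc : ∀ i j, c ≤ Q i j)
    (j l : Fin n) : ∑ i, |Q i j - Q i l| ≤ 2 * (1 - n * c) := by
  have h1 : ∑ i, |Q i j - Q i l| =
      (∑ i, Q i j) + (∑ i, Q i l) - 2 * ∑ i, min (Q i j) (Q i l) := by
    have := Finset.sum_congr rfl (fun i (_ : i ∈ Finset.univ) => abs_sub_eq_min (Q i j) (Q i l))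
    rw [this, Finset.sum_sub_distrib, Finset.sum_add_distrib, Finset.mul_sum]
  have h2 : (n : ℝ) * c ≤ ∑ i, min (Q i j) (Q i l) := by
    calc (n : ℝ) * c = ∑ _i : Fin n, c := by simp [mul_comm]
    _ ≤ _ := Finset.sum_le_sum (fun i _ => le_min (hQc i j) (hQc i l))
  rw [h1, hcol, hcol]
  linarith

lemma l1_contract {n : ℕ} (hn : 1 ≤ n) (Q : Matrix (Fin n) (Fin n) ℝ)
    (hQ : ∀ i j, 0 ≤ Q i j) (hcol : ∀ j, ∑ i, Q i j = 1)
    (c : ℝ) (hc : 0 ≤ c) (hQc : ∀ i j, c ≤ Q i j)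
    (d : Fin n → ℝ) (hd : ∑ k, d k = 0) :
    ∑ i, |∑ k, Q i k * d k| ≤ (1 - n * c) * ∑ k, |d k| := by
  have i0 : Fin n := ⟨0, hn⟩
  have hnc : (n : ℝ) * c ≤ 1 := by
    calc (n : ℝ) * c = ∑ _i : Fin n, c := by simp [mul_comm]
    _ ≤ ∑ i, Q i i0 := Finset.sum_le_sum (fun i _ => hQc i i0)
    _ = 1 := hcol i0
  set dp : Fin n → ℝ := fun k => max (d k) 0 with hdp
  set dm : Fin n → ℝ := fun k => max (-d k) 0 with hdm
  have hdp0 : ∀ k, 0 ≤ dp k := fun k => le_max_right _ _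
  have hdm0 : ∀ k, 0 ≤ dm k := fun k => le_max_right _ _
  have hsub : ∀ k, d k = dp k - dm k := by
    intro k; rcases le_total (d k) 0 with h | h
    · simp [hdp, hdm, max_eq_right h, max_eq_left (by linarith : 0 ≤ -d k)]
    · simp [hdp, hdm, max_eq_left h, max_eq_right (by linarith : -d k ≤ 0)]
  have habs : ∀ k, |d k| = dp k + dm k := by
    intro k; rcases le_total (d k) 0 with h | h
    · rw [abs_of_nonpos h]; simp [hdp, hdm, max_eq_right h, max_eq_left (by linarith : 0 ≤ -d k)]
    · rw [abs_of_nonneg h]; simp [hdp, hdm, max_eq_left h, max_eq_right (by linarith : -d k ≤ 0)]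
  set σ := ∑ k, dp k with hσ
  have hσm : ∑ k, dm k = σ := by
    have : ∑ k, (dp k - dm k) = 0 := by
      have h2 : ∑ k, (dp k - dm k) = ∑ k, d k :=
        Finset.sum_congr rfl (fun k _ => (hsub k).symm)
      rw [h2, hd]
    rw [Finset.sum_sub_distrib] at this; linarith
  have hσ0 : 0 ≤ σ := Finset.sum_nonneg (fun k _ => hdp0 k)
  have habsum : ∑ k, |d k| = 2 * σ := by
    rw [Finset.sum_congr rfl (fun k _ => habs k), Finset.sum_add_distrib, hσm]; ring
  rcases eq_or_lt_of_le hσ0 with h0 | hσpos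
  · have hdz : ∀ k, d k = 0 := by
      intro k
      have h1 : dp k = 0 := by
        have := (Finset.sum_eq_zero_iff_of_nonneg (fun k _ => hdp0 k)).1 h0.symm k (mem_univ k)
        exact this
      have h2 : dm k = 0 := by
        have := (Finset.sum_eq_zero_iff_of_nonneg (fun k _ => hdm0 k)).1 (by rw [hσm]; exact h0.symm) k (mem_univ k)
        exact this
      rw [hsub k, h1, h2]; ring
    simp only [hdz, mul_zero, Finset.sum_const_zero, abs_zero]
    positivity
  · have key : ∀ i, ∑ k, Q i k * d k = σ⁻¹ * ∑ k, ∑ l, dp k * dm l * (Q i k - Q i l) := by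
      intro i
      have expand : ∑ k, ∑ l, dp k * dm l * (Q i k - Q i l)
          = (∑ k, dp k * Q i k) * σ - σ * (∑ l, dm l * Q i l) := by
        have : ∀ k, ∑ l, dp k * dm l * (Q i k - Q i l)
            = dp k * Q i k * σ - dp k * (∑ l, dm l * Q i l) := by
          intro k
          rw [← hσm, Finset.mul_sum, Finset.mul_sum, ← Finset.sum_sub_distrib]
          exact Finset.sum_congr rfl (fun l _ => by ring)
        rw [Finset.sum_congr rfl (fun k _ => this k), Finset.sum_sub_distrib,
          ← Finset.sum_mul, ← Finset.sum_mul, hσ]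
      rw [expand]
      have : ∑ k, Q i k * d k = (∑ k, dp k * Q i k) - (∑ l, dm l * Q i l) := by
        rw [← Finset.sum_sub_distrib]
        exact Finset.sum_congr rfl (fun k _ => by rw [hsub k]; ring)
      rw [this]
      field_simp
    calc ∑ i, |∑ k, Q i k * d k|
        ≤ ∑ i, σ⁻¹ * ∑ k, ∑ l, dp k * dm l * |Q i k - Q i l| := by
          apply Finset.sum_le_sum; intro i _
          rw [key i]
          rw [abs_mul, abs_of_nonneg (inv_nonneg.2 hσ0)]
          apply mul_le_mul_of_nonneg_left _ (inv_nonneg.2 hσ0)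
          calc |∑ k, ∑ l, dp k * dm l * (Q i k - Q i l)|
              ≤ ∑ k, |∑ l, dp k * dm l * (Q i k - Q i l)| := Finset.abs_sum_le_sum_abs _ _
            _ ≤ ∑ k, ∑ l, dp k * dm l * |Q i k - Q i l| := by
                apply Finset.sum_le_sum; intro k _
                calc |∑ l, dp k * dm l * (Q i k - Q i l)|
                    ≤ ∑ l, |dp k * dm l * (Q i k - Q i l)| := Finset.abs_sum_le_sum_abs _ _
                  _ = ∑ l, dp k * dm l * |Q i k - Q i l| := by
                      apply Finset.sum_congr rfl; intro l _
                      rw [abs_mul, abs_of_nonneg (mul_nonneg (hdp0 k) (hdm0 l))]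
      _ = σ⁻¹ * ∑ k, ∑ l, dp k * dm l * ∑ i, |Q i k - Q i l| := by
          rw [← Finset.mul_sum]
          congr 1
          have : ∀ k : Fin n, ∀ l : Fin n, dp k * dm l * ∑ i, |Q i k - Q i l|
              = ∑ i, dp k * dm l * |Q i k - Q i l| := fun k l => Finset.mul_sum _ _ _
          simp only [this]
          rw [Finset.sum_comm]
          exact Finset.sum_congr rfl (fun k _ => Finset.sum_comm)
      _ ≤ σ⁻¹ * ∑ k, ∑ l, dp k * dm l * (2 * (1 - n * c)) := by
          apply mul_le_mul_of_nonneg_left _ (inv_nonneg.2 hσ0)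
          apply Finset.sum_le_sum; intro k _
          apply Finset.sum_le_sum; intro l _
          exact mul_le_mul_of_nonneg_left (colDiff Q hcol c hQc k l) (mul_nonneg (hdp0 k) (hdm0 l))
      _ = (1 - n * c) * ∑ k, |d k| := by
          rw [habsum]
          have : ∑ k, ∑ l, dp k * dm l * (2 * (1 - ↑n * c)) = σ * σ * (2 * (1 - n * c)) := by
            have h3 : ∀ k : Fin n, ∑ l, dp k * dm l * (2 * (1 - ↑n * c))
                = dp k * (σ * (2 * (1 - ↑n * c))) := by
              intro k
              rw [← hσm, Finset.sum_mul, Finset.mul_sum]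
              exact Finset.sum_congr rfl (fun l _ => by ring)
            simp only [h3]
            rw [← Finset.sum_mul, ← hσ]
            ring
          rw [this]
          field_simp

lemma phiAux_succ {n : ℕ} (M : ℕ → Matrix (Fin n) (Fin n) ℝ) (τ k : ℕ) :
    phiAux M τ (k+1) = M (τ + k) * phiAux M τ k := rfl

lemma phiAux_nonneg {n : ℕ} (W : ℕ → Matrix (Fin n) (Fin n) ℝ)
    (hW : ∀ t i j, 0 ≤ W t i j) (τ k : ℕ) : ∀ i j, 0 ≤ phiAux W τ k i j := by
  induction k with
  | zero => intro i j; by_cases h : i = j <;> simp [phiAux, Matrix.one_apply, h]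
  | succ k ih =>
    intro i j
    rw [phiAux_succ, Matrix.mul_apply]
    exact Finset.sum_nonneg (fun m _ => mul_nonneg (hW _ _ _) (ih m j))

lemma phiAux_col {n : ℕ} (W : ℕ → Matrix (Fin n) (Fin n) ℝ)
    (hWcol : ∀ t j, ∑ i, W t i j = 1) (τ k : ℕ) :
    ∀ j, ∑ i, phiAux W τ k i j = 1 := by
  induction k with
  | zero => intro j; simp [phiAux, Matrix.one_apply]
  | succ k ih =>
    intro j
    simp only [phiAux_succ, Matrix.mul_apply]
    rw [Finset.sum_comm]
    calc ∑ m, ∑ i, W (τ + k) i m * phiAux W τ k m j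
        = ∑ m, (∑ i, W (τ + k) i m) * phiAux W τ k m j := by
          apply Finset.sum_congr rfl; intro m _
          rw [Finset.sum_mul]
      _ = 1 := by simp only [hWcol, one_mul]; exact ih j

lemma phiAux_add {n : ℕ} (W : ℕ → Matrix (Fin n) (Fin n) ℝ) (τ b a : ℕ) :
    phiAux W τ (b + a) = phiAux W (τ + b) a * phiAux W τ b := by
  induction a with
  | zero => simp [phiAux]
  | succ a ih =>
    show W (τ + (b + a)) * phiAux W τ (b + a) = phiAux W (τ + b) (a + 1) * phiAux W τ b
    rw [ih, phiAux_succ, ← Nat.add_assoc, Matrix.mul_assoc]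

lemma block_pos {n : ℕ} (hn : 1 ≤ n) (W : ℕ → Matrix (Fin n) (Fin n) ℝ)
    (hWnonneg : ∀ t i j, 0 ≤ W t i j)
    (hWdiag : ∀ t i, 0 < W t i i)
    (β : ℝ) (hβ : 0 < β)
    (hWβ : ∀ t i j, 0 < W t i j → β ≤ W t i j)
    (L : ℕ) (hL : 0 < L)
    (hconn : ∀ t : ℕ, ∀ i j : Fin n,
      Relation.TransGen (fun a b => ∃ k ∈ Finset.Ico t (t + L), 0 < W k b a) i j)
    (s : ℕ) : ∀ i j, β ^ (n * L) ≤ phiAux W s (n * L) i j := by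
  classical
  intro i j
  set G : ℕ → Finset (Fin n) :=
    fun u => Finset.univ.filter (fun a => β ^ u ≤ phiAux W s u a j) with hG
  have hmemG : ∀ u a, a ∈ G u ↔ β ^ u ≤ phiAux W s u a j := by
    intro u a; simp [hG]
  have hj0 : j ∈ G 0 := by
    rw [hmemG]; simp [phiAux, Matrix.one_apply]
  have hstep : ∀ u a b, a ∈ G u → 0 < W (s + u) b a → b ∈ G (u + 1) := by
    intro u a b ha hpos
    rw [hmemG] at ha ⊢
    rw [phiAux_succ, Matrix.mul_apply]
    calc β ^ (u + 1) = β * β ^ u := by ring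
      _ ≤ W (s + u) b a * phiAux W s u a j := by
          apply mul_le_mul (hWβ _ _ _ hpos) ha (by positivity)
          exact (hWnonneg _ _ _)
      _ ≤ ∑ m, W (s + u) b m * phiAux W s u m j := by
          apply Finset.single_le_sum (f := fun m => W (s + u) b m * phiAux W s u m j)
            (fun m _ => mul_nonneg (hWnonneg _ _ _) (phiAux_nonneg W hWnonneg s u m j))
            (mem_univ a)
  have hdiagstep : ∀ u a, a ∈ G u → a ∈ G (u + 1) := by
    intro u a ha; exact hstep u a a ha (hWdiag _ _)
  have hmono : ∀ u v, u ≤ v → G u ⊆ G v := by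
    intro u v huv
    induction v with
    | zero => have : u = 0 := Nat.le_zero.1 huv; rw [this]
    | succ v ih =>
      rcases Nat.lt_or_ge u (v+1) with h | h
      · intro a ha
        exact hdiagstep v a (ih (Nat.lt_succ_iff.1 h) ha)
      · have : u = v + 1 := le_antisymm huv h
        rw [this]
  have hjall : ∀ u, j ∈ G u := fun u => hmono 0 u (Nat.zero_le u) hj0
  have hcard : ∀ m, min n (m + 1) ≤ (G (m * L)).card := by
    intro m
    induction m with
    | zero =>
      have h := Finset.card_pos.2 ⟨j, hj0⟩
      simp only [Nat.zero_mul] at *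
      omega
    | succ m ih =>
      by_cases huniv : G (m * L) = Finset.univ
      · have h1 : Finset.univ ⊆ G ((m+1) * L) := by
          rw [← huniv]
          exact hmono (m*L) ((m+1)*L) (by rw [Nat.succ_mul]; omega)
        have h2 : G ((m+1) * L) = Finset.univ := Finset.univ_subset_iff.1 h1
        rw [h2, Finset.card_univ, Fintype.card_fin]
        omega
      · obtain ⟨b, hb⟩ : ∃ b, b ∉ G (m * L) := by
          by_contra h; push_neg at h
          exact huniv (Finset.eq_univ_iff_forall.2 h)
        have reach : ∀ x, Relation.TransGen
            (fun a b => ∃ k ∈ Finset.Ico (s + m * L) (s + m * L + L), 0 < W k b a) j x →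
            x ∈ G (m * L) ∨ ∃ b', b' ∉ G (m * L) ∧ b' ∈ G ((m+1) * L) := by
          intro x hx
          induction hx with
          | @single x' hedge =>
            obtain ⟨k, hk, hpos⟩ := hedge
            rw [Finset.mem_Ico] at hk
            have hx1 : x' ∈ G (k - s + 1) := by
              apply hstep (k - s) j x' _ (by rwa [Nat.add_sub_cancel' (by omega)])
              exact hjall _
            have hx2 : x' ∈ G ((m+1) * L) := hmono _ _ (by rw [Nat.succ_mul]; omega) hx1
            by_cases h : x' ∈ G (m * L)
            · exact Or.inl h
            · exact Or.inr ⟨x', h, hx2⟩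
          | @tail y x' hyx hedge ih2 =>
            rcases ih2 with hy | hcross
            · obtain ⟨k, hk, hpos⟩ := hedge
              rw [Finset.mem_Ico] at hk
              have hy' : y ∈ G (k - s) := hmono _ _ (by omega) hy
              have hx1 : x' ∈ G (k - s + 1) := by
                apply hstep (k - s) y x' hy' (by rwa [Nat.add_sub_cancel' (by omega)])
              have hx2 : x' ∈ G ((m+1) * L) := hmono _ _ (by rw [Nat.succ_mul]; omega) hx1
              by_cases h : x' ∈ G (m * L)
              · exact Or.inl h
              · exact Or.inr ⟨x', h, hx2⟩
            · exact Or.inr hcross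
        rcases reach b (hconn (s + m * L) j b) with hb' | ⟨b', hb1, hb2⟩
        · exact absurd hb' hb
        · have hsub : insert b' (G (m * L)) ⊆ G ((m+1) * L) := by
            intro a ha
            rcases Finset.mem_insert.1 ha with h | h
            · rw [h]; exact hb2
            · exact hmono _ _ (by rw [Nat.succ_mul]; omega) h
          have : (G (m * L)).card + 1 ≤ (G ((m+1) * L)).card := by
            rw [← Finset.card_insert_of_notMem hb1]
            exact Finset.card_le_card hsub
          have hmin : min n (m + 1 + 1) ≤ min n (m + 1) + 1 := by omega
          omega
  have hfull : G (n * L) = Finset.univ := by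
    have h1 := hcard (n - 1)
    have h2 : min n (n - 1 + 1) = n := by omega
    rw [h2] at h1
    have h3 : G ((n-1) * L) = Finset.univ := by
      apply Finset.eq_univ_of_card
      have := Finset.card_le_card (Finset.subset_univ (G ((n-1)*L)))
      simp only [Finset.card_univ, Fintype.card_fin] at *
      omega
    apply Finset.univ_subset_iff.1
    rw [← h3]
    exact hmono _ _ (mul_le_mul_left (Nat.sub_le n 1) L)
  have := (hmemG (n * L) i).1 (hfull ▸ Finset.mem_univ i)
  exact this

lemma prod_contract {n : ℕ} (hn : 1 ≤ n) (W : ℕ → Matrix (Fin n) (Fin n) ℝ)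
    (hWnonneg : ∀ t i j, 0 ≤ W t i j)
    (hWcol : ∀ t j, ∑ i, W t i j = 1)
    (hWdiag : ∀ t i, 0 < W t i i)
    (β : ℝ) (hβ : 0 < β)
    (hWβ : ∀ t i j, 0 < W t i j → β ≤ W t i j)
    (L : ℕ) (hL : 0 < L)
    (hconn : ∀ t : ℕ, ∀ i j : Fin n,
      Relation.TransGen (fun a b => ∃ k ∈ Finset.Ico t (t + L), 0 < W k b a) i j) :
    ∀ m τ (d : Fin n → ℝ), (∑ k, d k = 0) →
      ∑ i, |∑ k, phiAux W τ m i k * d k| ≤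
        (1 - n * (β ^ (n*L) / 2)) ^ (m / (n * L)) * ∑ k, |d k| := by
  have hB : 0 < n * L := Nat.mul_pos hn hL
  set B := n * L with hBdef
  set lam : ℝ := 1 - (n:ℝ) * (β ^ B / 2) with hlam
  have i0 : Fin n := ⟨0, hn⟩
  have hnb1 : (n:ℝ) * β ^ B ≤ 1 := by
    have hbp := block_pos hn W hWnonneg hWdiag β hβ hWβ L hL hconn 0
    calc (n:ℝ) * β ^ B = ∑ _i : Fin n, β ^ B := by simp [mul_comm]
      _ ≤ ∑ i, phiAux W 0 B i i0 := Finset.sum_le_sum (fun i _ => hbp i i0)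
      _ = 1 := phiAux_col W hWcol 0 B i0
  have hlam0 : (0:ℝ) < lam := by
    rw [hlam]
    have hb2 : (0:ℝ) < β ^ B := by positivity
    nlinarith
  intro m
  induction m using Nat.strong_induction_on with
  | _ m ih =>
    intro τ d hd
    rcases Nat.lt_or_ge m B with hm | hm
    · rw [Nat.div_eq_of_lt hm, pow_zero, one_mul]
      have h := l1_contract hn (phiAux W τ m) (phiAux_nonneg W hWnonneg τ m)
        (phiAux_col W hWcol τ m) 0 le_rfl
        (fun i j => phiAux_nonneg W hWnonneg τ m i j) d hd
      simpa using h
    · set d' : Fin n → ℝ := fun i => ∑ k, phiAux W τ B i k * d k with hd'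
      have hd'sum : ∑ i, d' i = 0 := by
        simp only [hd']
        rw [Finset.sum_comm]
        calc ∑ k, ∑ i, phiAux W τ B i k * d k
            = ∑ k, (∑ i, phiAux W τ B i k) * d k :=
              Finset.sum_congr rfl (fun k _ => (Finset.sum_mul _ _ _).symm)
          _ = ∑ k, d k := by simp [phiAux_col W hWcol]
          _ = 0 := hd
      have hsplit : ∀ i, ∑ k, phiAux W τ m i k * d k
          = ∑ l, phiAux W (τ + B) (m - B) i l * d' l := by
        intro i
        have hm' : B + (m - B) = m := by omega
        conv_lhs => rw [← hm', phiAux_add]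
        simp only [Matrix.mul_apply]
        calc ∑ k, (∑ l, phiAux W (τ+B) (m-B) i l * phiAux W τ B l k) * d k
            = ∑ k, ∑ l, phiAux W (τ+B) (m-B) i l * (phiAux W τ B l k * d k) := by
              apply Finset.sum_congr rfl; intro k _
              rw [Finset.sum_mul]
              exact Finset.sum_congr rfl (fun l _ => by ring)
          _ = ∑ l, ∑ k, phiAux W (τ+B) (m-B) i l * (phiAux W τ B l k * d k) :=
              Finset.sum_comm
          _ = ∑ l, phiAux W (τ+B) (m-B) i l * d' l := by
              apply Finset.sum_congr rfl; intro l _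
              rw [← Finset.mul_sum]
      have hQlb : ∀ i j, β ^ B / 2 ≤ phiAux W τ B i j := by
        intro i j
        have h1 := block_pos hn W hWnonneg hWdiag β hβ hWβ L hL hconn τ i j
        have hb2 : (0:ℝ) < β ^ B := by positivity
        linarith
      have hstep1 : ∑ i, |d' i| ≤ lam * ∑ k, |d k| := by
        have := l1_contract hn (phiAux W τ B) (phiAux_nonneg W hWnonneg τ B)
          (phiAux_col W hWcol τ B) (β ^ B / 2) (by positivity) hQlb d hd
        exact this
      have hIH := ih (m - B) (by omega) (τ + B) d' hd'sum
      have hdiv : (m - B) / B + 1 = m / B := (Nat.div_eq_sub_div hB hm).symm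
      calc ∑ i, |∑ k, phiAux W τ m i k * d k|
          = ∑ i, |∑ l, phiAux W (τ+B) (m-B) i l * d' l| :=
            Finset.sum_congr rfl (fun i _ => by rw [hsplit i])
        _ ≤ lam ^ ((m - B)/B) * ∑ i, |d' i| := hIH
        _ ≤ lam ^ ((m - B)/B) * (lam * ∑ k, |d k|) :=
            mul_le_mul_of_nonneg_left hstep1 (pow_nonneg hlam0.le _)
        _ = lam ^ ((m-B)/B + 1) * ∑ k, |d k| := by ring
        _ = lam ^ (m / B) * ∑ k, |d k| := by rw [hdiv]

set_option maxHeartbeats 2000000 in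
/-- With the push-sum weights initialized at a positive stochastic vector `c`, the
products `S(t)⋯S(τ+1)S(τ)` converge to `𝟙·y(τ)ᵀ` exponentially fast, uniformly in `τ`. -/
theorem phiS_exponential_convergence_general_init (n : ℕ) (hn : 1 ≤ n)
    (W : ℕ → Matrix (Fin n) (Fin n) ℝ)
    (hWnonneg : ∀ t i j, 0 ≤ W t i j)
    (hWcol : ∀ t j, ∑ i, W t i j = 1)
    (hWdiag : ∀ t i, 0 < W t i i)
    (β : ℝ) (hβ : 0 < β)
    (hWβ : ∀ t i j, 0 < W t i j → β ≤ W t i j)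
    (L : ℕ) (hL : 0 < L)
    (hconn : ∀ t : ℕ, ∀ i j : Fin n,
      Relation.TransGen (fun a b => ∃ k ∈ Finset.Ico t (t + L), 0 < W k b a) i j)
    (c : Fin n → ℝ) (hc : ∀ i, 0 < c i) (hcsum : ∑ i, c i = 1)
    (y : ℕ → Fin n → ℝ)
    (hy0 : ∀ i, y 0 i = c i)
    (hy : ∀ t i, y (t + 1) i = ∑ j, W t i j * y t j) :
    ∃ C > 0, ∃ μ : ℝ, 0 ≤ μ ∧ μ < 1 ∧
      ∀ t τ : ℕ, τ ≤ t → ∀ i j : Fin n,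
        |Phi (Smat W y) (t + 1) τ i j - y τ j| ≤ C * μ ^ (t - τ) := by
  classical
  set B := n * L with hBdef
  have hB : 0 < B := Nat.mul_pos hn hL
  have i0 : Fin n := ⟨0, hn⟩
  -- positivity and stochasticity of y
  have hypos : ∀ t i, 0 < y t i := by
    intro t
    induction t with
    | zero => intro i; rw [hy0]; exact hc i
    | succ t ihp =>
      intro i
      rw [hy]
      calc (0:ℝ) < W t i i * y t i := mul_pos (hWdiag t i) (ihp i)
        _ ≤ ∑ j, W t i j * y t j :=
          Finset.single_le_sum (f := fun j => W t i j * y t j)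
            (fun j _ => mul_nonneg (hWnonneg t i j) (ihp j).le) (mem_univ i)
  have hysum : ∀ t, ∑ i, y t i = 1 := by
    intro t
    induction t with
    | zero => simp only [hy0]; exact hcsum
    | succ t ihs =>
      simp only [hy]
      rw [Finset.sum_comm]
      calc ∑ j, ∑ i, W t i j * y t j
          = ∑ j, (∑ i, W t i j) * y t j :=
            Finset.sum_congr rfl (fun j _ => (Finset.sum_mul _ _ _).symm)
        _ = 1 := by simp only [hWcol, one_mul]; exact ihs
  have hyle : ∀ t i, y t i ≤ 1 := by
    intro t i
    rw [← hysum t]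
    exact Finset.single_le_sum (fun j _ => (hypos t j).le) (mem_univ i)
  have hyPhi : ∀ τ m i, y (τ + m) i = ∑ k, phiAux W τ m i k * y τ k := by
    intro τ m
    induction m with
    | zero => intro i; simp [phiAux, Matrix.one_apply]
    | succ m ihm =>
      intro i
      show y ((τ + m) + 1) i = _
      rw [hy]
      calc ∑ j, W (τ+m) i j * y (τ+m) j
          = ∑ j, ∑ k, W (τ+m) i j * (phiAux W τ m j k * y τ k) := by
            apply Finset.sum_congr rfl; intro j _
            rw [ihm j, Finset.mul_sum]
        _ = ∑ k, ∑ j, W (τ+m) i j * (phiAux W τ m j k * y τ k) := Finset.sum_comm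
        _ = ∑ k, phiAux W τ (m+1) i k * y τ k := by
            apply Finset.sum_congr rfl; intro k _
            rw [phiAux_succ, Matrix.mul_apply, Finset.sum_mul]
            exact Finset.sum_congr rfl (fun j _ => by ring)
  -- basic constants
  have hβ1 : β ≤ 1 := by
    have h1 : β ≤ W 0 i0 i0 := hWβ 0 i0 i0 (hWdiag 0 i0)
    have h2 : W 0 i0 i0 ≤ 1 := by
      rw [← hWcol 0 i0]
      exact Finset.single_le_sum (fun i _ => hWnonneg 0 i i0) (mem_univ i0)
    linarith
  obtain ⟨i₁, -, hi₁⟩ := Finset.exists_min_image (univ : Finset (Fin n)) c ⟨i0, mem_univ i0⟩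
  have hc1 : c i₁ ≤ 1 := by
    rw [← hcsum]
    exact Finset.single_le_sum (fun i _ => (hc i).le) (mem_univ i₁)
  have hyg : ∀ t i, β ^ t * c i ≤ y t i := by
    intro t
    induction t with
    | zero => intro i; rw [hy0]; simp
    | succ t ihg =>
      intro i
      rw [hy]
      calc β ^ (t+1) * c i = β * (β ^ t * c i) := by ring
        _ ≤ W t i i * y t i :=
            mul_le_mul (hWβ t i i (hWdiag t i)) (ihg i)
              (by have := hc i; positivity) (hWnonneg t i i)
        _ ≤ ∑ j, W t i j * y t j :=
            Finset.single_le_sum (f := fun j => W t i j * y t j)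
              (fun j _ => mul_nonneg (hWnonneg t i j) (hypos t j).le) (mem_univ i)
  set δ₀ : ℝ := β ^ B * c i₁ with hδ₀
  have hδ₀pos : 0 < δ₀ := mul_pos (pow_pos hβ B) (hc i₁)
  have hylb : ∀ t i, δ₀ ≤ y t i := by
    intro t i
    rcases Nat.lt_or_ge t B with h | h
    · calc δ₀ = β ^ B * c i₁ := rfl
        _ ≤ β ^ t * c i₁ := mul_le_mul_of_nonneg_right
            (pow_le_pow_of_le_one hβ.le hβ1 h.le) (hc i₁).le
        _ ≤ β ^ t * c i := mul_le_mul_of_nonneg_left (hi₁ i (mem_univ i)) (by positivity)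
        _ ≤ y t i := hyg t i
    · have heq : y t i = ∑ k, phiAux W (t - B) B i k * y (t-B) k := by
        conv_lhs => rw [show t = (t - B) + B by omega]
        exact hyPhi (t-B) B i
      rw [heq]
      calc δ₀ = β ^ B * c i₁ := rfl
        _ ≤ β ^ B * 1 := mul_le_mul_of_nonneg_left hc1 (by positivity)
        _ = β ^ B * ∑ k, y (t-B) k := by rw [hysum]
        _ = ∑ k, β ^ B * y (t-B) k := Finset.mul_sum _ _ _
        _ ≤ ∑ k, phiAux W (t-B) B i k * y (t-B) k := by
            apply Finset.sum_le_sum; intro k _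
            exact mul_le_mul_of_nonneg_right
              (block_pos hn W hWnonneg hWdiag β hβ hWβ L hL hconn (t-B) i k)
              (hypos _ k).le
  -- relation between the products of S and of W
  have hSphi : ∀ τ m i j, phiAux (Smat W y) τ m i j
      = phiAux W τ m i j * y τ j / y (τ + m) i := by
    intro τ m
    induction m with
    | zero =>
      intro i j
      show (1 : Matrix (Fin n) (Fin n) ℝ) i j = (1 : Matrix (Fin n) (Fin n) ℝ) i j * y τ j / y τ i
      by_cases h : i = j
      · subst h
        rw [Matrix.one_apply_eq, one_mul, div_self (hypos τ i).ne']
      · rw [Matrix.one_apply_ne h]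
        simp
    | succ m ihm =>
      intro i j
      show (Smat W y (τ + m) * phiAux (Smat W y) τ m) i j
          = phiAux W τ (m+1) i j * y τ j / y ((τ + m) + 1) i
      rw [Matrix.mul_apply]
      have hS : ∀ a b, Smat W y (τ+m) a b
          = W (τ+m) a b * y (τ+m) b / y ((τ+m)+1) a := by
        intro a b
        rw [show Smat W y (τ+m) a b
          = W (τ+m) a b * y (τ+m) b / ∑ k, W (τ+m) a k * y (τ+m) k from rfl, ← hy (τ+m) a]
      calc ∑ k, Smat W y (τ+m) i k * phiAux (Smat W y) τ m k j
          = ∑ k, W (τ+m) i k * phiAux W τ m k j * y τ j / y ((τ+m)+1) i := by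
            apply Finset.sum_congr rfl; intro k _
            rw [hS, ihm]
            have h1 : y (τ+m) k ≠ 0 := (hypos _ k).ne'
            have h2 : y ((τ+m)+1) i ≠ 0 := (hypos _ i).ne'
            field_simp
        _ = (∑ k, W (τ+m) i k * phiAux W τ m k j) * y τ j / y ((τ+m)+1) i := by
            rw [← Finset.sum_div, ← Finset.sum_mul]
        _ = phiAux W τ (m+1) i j * y τ j / y ((τ+m)+1) i := by
            rw [phiAux_succ, Matrix.mul_apply]
  -- the contraction constants
  set lam : ℝ := 1 - (n:ℝ) * (β ^ B / 2) with hlam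
  have hnb1 : (n:ℝ) * β ^ B ≤ 1 := by
    have hbp := block_pos hn W hWnonneg hWdiag β hβ hWβ L hL hconn 0
    calc (n:ℝ) * β ^ B = ∑ _i : Fin n, β ^ B := by simp [mul_comm]
      _ ≤ ∑ i, phiAux W 0 B i i0 := Finset.sum_le_sum (fun i _ => hbp i i0)
      _ = 1 := phiAux_col W hWcol 0 B i0
  have hlam0 : (0:ℝ) < lam := by
    have hb2 : (0:ℝ) < β ^ B := by positivity
    rw [hlam]; nlinarith
  have hlam1 : lam < 1 := by
    have hb2 : (0:ℝ) < β ^ B := by positivity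
    have hn' : (0:ℝ) < n := by exact_mod_cast hn
    rw [hlam]; nlinarith
  set μ : ℝ := lam ^ ((B:ℝ)⁻¹) with hμ
  have hBR : (0:ℝ) < (B:ℝ) := by exact_mod_cast hB
  have hμ0 : 0 ≤ μ := Real.rpow_nonneg hlam0.le _
  have hμ1 : μ < 1 := Real.rpow_lt_one hlam0.le hlam1 (by positivity)
  refine ⟨2 / (δ₀ * lam), by positivity, μ, hμ0, hμ1, ?_⟩
  intro t τ htτ i j
  set m := t + 1 - τ with hmdef
  have hm1 : τ + m = t + 1 := by omega
  set P := phiAux W τ m with hP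
  set d : Fin n → ℝ := fun k => (if k = j then (1:ℝ) else 0) - y τ k with hd
  have hdsum : ∑ k, d k = 0 := by
    simp only [hd, Finset.sum_sub_distrib]
    rw [hysum τ]
    simp
  have hdabs : ∑ k, |d k| ≤ 2 := by
    have hterm : ∀ k, |d k| ≤ (if k = j then (1:ℝ) else 0) + y τ k := by
      intro k
      have h1 := (hypos τ k).le
      have h2 := hyle τ k
      simp only [hd]
      by_cases h : k = j
      · rw [if_pos h, abs_of_nonneg (by linarith)]; linarith
      · rw [if_neg h, zero_sub, abs_neg, abs_of_nonneg h1]; linarith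
    calc ∑ k, |d k| ≤ ∑ k, ((if k = j then (1:ℝ) else 0) + y τ k) :=
          Finset.sum_le_sum (fun k _ => hterm k)
      _ = (∑ k, (if k = j then (1:ℝ) else 0)) + ∑ k, y τ k := Finset.sum_add_distrib
      _ = 1 + 1 := by rw [hysum τ]; simp
      _ = 2 := by norm_num
  have hkey := prod_contract hn W hWnonneg hWcol hWdiag β hβ hWβ L hL hconn m τ d hdsum
  have hkey2 : ∑ i', |∑ k, P i' k * d k| ≤ lam ^ (m / B) * 2 := by
    calc ∑ i', |∑ k, P i' k * d k| ≤ lam ^ (m / B) * ∑ k, |d k| := hkey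
      _ ≤ lam ^ (m/B) * 2 := mul_le_mul_of_nonneg_left hdabs (pow_nonneg hlam0.le _)
  have hentry : ∀ i', ∑ k, P i' k * d k = P i' j - y (t+1) i' := by
    intro i'
    simp only [hd, mul_sub, Finset.sum_sub_distrib]
    congr 1
    · simp [mul_ite, mul_one, mul_zero]
    · rw [← hm1]; exact (hyPhi τ m i').symm
  have hsingle : |P i j - y (t+1) i| ≤ lam ^ (m / B) * 2 := by
    calc |P i j - y (t+1) i| = |∑ k, P i k * d k| := by rw [hentry i]
      _ ≤ ∑ i', |∑ k, P i' k * d k| :=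
          Finset.single_le_sum (f := fun i' => |∑ k, P i' k * d k|)
            (fun i' _ => abs_nonneg _) (mem_univ i)
      _ ≤ _ := hkey2
  have hPhiS : Phi (Smat W y) (t + 1) τ i j = P i j * y τ j / y (t+1) i := by
    have h0 : Phi (Smat W y) (t + 1) τ i j = phiAux (Smat W y) τ m i j := rfl
    rw [h0, hSphi τ m i j, hm1, hP]
  have hY := hypos (t+1) i
  have hdiff : |Phi (Smat W y) (t + 1) τ i j - y τ j|
      = y τ j * |P i j - y (t+1) i| / y (t+1) i := by
    rw [hPhiS]
    have h1 : P i j * y τ j / y (t+1) i - y τ j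
        = y τ j * (P i j - y (t+1) i) / y (t+1) i := by
      field_simp
    rw [h1, abs_div, abs_mul, abs_of_nonneg (hypos τ j).le, abs_of_pos hY]
  have hstep2 : |Phi (Smat W y) (t + 1) τ i j - y τ j| ≤ 2 * lam ^ (m/B) / δ₀ := by
    rw [hdiff]
    apply div_le_div₀ (by positivity) ?_ hδ₀pos (hylb (t+1) i)
    calc y τ j * |P i j - y (t+1) i| ≤ 1 * (lam ^ (m/B) * 2) :=
        mul_le_mul (hyle τ j) hsingle (abs_nonneg _) one_pos.le
      _ = 2 * lam ^ (m/B) := by ring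
  -- exponent manipulation
  have hq : (m:ℝ)/(B:ℝ) - 1 ≤ ((m / B : ℕ) : ℝ) := by
    have h1 : ((B * (m / B) + m % B : ℕ) : ℝ) = (m:ℝ) := by rw [Nat.div_add_mod]
    have h2 : ((m % B : ℕ) : ℝ) < (B:ℝ) := by exact_mod_cast Nat.mod_lt m hB
    push_cast at h1
    rw [sub_le_iff_le_add, div_le_iff₀ hBR]
    nlinarith
  have hpow : lam ^ (m / B) ≤ lam⁻¹ * μ ^ m := by
    have e1 : lam ^ (m / B) = lam ^ (((m / B : ℕ)):ℝ) := (Real.rpow_natCast lam (m/B)).symm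
    have e2 : lam ^ (((m / B : ℕ)):ℝ) ≤ lam ^ ((m:ℝ)/(B:ℝ) - 1) :=
      Real.rpow_le_rpow_of_exponent_ge hlam0 hlam1.le hq
    have e3 : lam ^ ((m:ℝ)/(B:ℝ) - 1) = lam⁻¹ * lam ^ ((m:ℝ)/(B:ℝ)) := by
      rw [Real.rpow_sub hlam0, Real.rpow_one]
      ring
    have e4 : lam ^ ((m:ℝ)/(B:ℝ)) = μ ^ m := by
      rw [hμ, ← Real.rpow_natCast (lam ^ ((B:ℝ)⁻¹)) m, ← Real.rpow_mul hlam0.le]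
      congr 1
      field_simp
    calc lam ^ (m / B) = lam ^ (((m / B : ℕ)):ℝ) := e1
      _ ≤ lam ^ ((m:ℝ)/(B:ℝ) - 1) := e2
      _ = lam⁻¹ * lam ^ ((m:ℝ)/(B:ℝ)) := e3
      _ = lam⁻¹ * μ ^ m := by rw [e4]
  have hμm : μ ^ m = μ ^ (t - τ) * μ := by
    rw [show m = (t - τ) + 1 by omega, pow_succ]
  calc |Phi (Smat W y) (t + 1) τ i j - y τ j| ≤ 2 * lam ^ (m/B) / δ₀ := hstep2
    _ ≤ 2 * (lam⁻¹ * μ ^ m) / δ₀ := by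
        exact (div_le_div_iff_of_pos_right hδ₀pos).2
          (mul_le_mul_of_nonneg_left hpow (by norm_num))
    _ = 2 / (δ₀ * lam) * μ ^ m := by
        field_simp
    _ ≤ 2 / (δ₀ * lam) * μ ^ (t - τ) := by
        rw [hμm]
        have h1 : 0 ≤ 2 / (δ₀ * lam) := by positivity
        have h2 : μ ^ (t - τ) * μ ≤ μ ^ (t - τ) * 1 :=
          mul_le_mul_of_nonneg_left hμ1.le (pow_nonneg hμ0 _)
        nlinarith [pow_nonneg hμ0 (t - τ)]
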